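/- Let F satisfy the structural conditions, set α⁺ := α⁺(F,ω), and suppose 0 < α < α⁺. Then, with c := (1/2)·λ·α·(α⁺ − α), there exists a function u ∈ H_α(ω) with u > 0 in C_ω which is a viscosity supersolution of F(D²u,Du,x) ≥ c·|x|⁻²·u(x) in C_ω. -/

import Mathlib

open Set Filter Topology Metric

noncomputable section

/-- Euclidean space `ℝⁿ`. -/
abbrev En (n : ℕ) := EuclideanSpace ℝ (Fin n)

/-- Real symmetric-matrix space `Sₙ` is modelled inside all `n × n` matrices. -/
abbrev Mat (n : ℕ) := Matrix (Fin n) (Fin n) ℝ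

/-- The type of fully nonlinear operators `F = F(M, p, x)`. -/
abbrev OpType (n : ℕ) := Mat n → En n → En n → ℝ

/-- The gradient vector `Dφ(x)` of a function `φ`. -/
def grad (n : ℕ) (φ : En n → ℝ) (x : En n) : En n :=
  WithLp.toLp 2 (fun i => fderiv ℝ φ x (EuclideanSpace.single i 1))

/-- The Hessian matrix `D²φ(x)` of a function `φ`. -/
def hess (n : ℕ) (φ : En n → ℝ) (x : En n) : Mat n :=
  Matrix.of fun i j =>
    fderiv ℝ (fun y => fderiv ℝ φ y (EuclideanSpace.single j 1)) x (EuclideanSpace.single i 1)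

/-- `u` is a viscosity subsolution of `G(D²u, Du, u, x) ≤ 0` in the open set `U`. -/
def ViscSubsol (n : ℕ) (G : Mat n → En n → ℝ → En n → ℝ) (U : Set (En n)) (u : En n → ℝ) :
    Prop :=
  ∀ φ : En n → ℝ, ContDiff ℝ 2 φ → ∀ x₀ ∈ U,
    IsLocalMaxOn (fun x => u x - φ x) U x₀ → G (hess n φ x₀) (grad n φ x₀) (u x₀) x₀ ≤ 0

/-- `u` is a viscosity supersolution of `G(D²u, Du, u, x) ≥ 0` in the open set `U`. -/
def ViscSupersol (n : ℕ) (G : Mat n → En n → ℝ → En n → ℝ) (U : Set (En n)) (u : En n → ℝ) :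
    Prop :=
  ∀ φ : En n → ℝ, ContDiff ℝ 2 φ → ∀ x₀ ∈ U,
    IsLocalMinOn (fun x => u x - φ x) U x₀ → 0 ≤ G (hess n φ x₀) (grad n φ x₀) (u x₀) x₀

/-- `u` is a (continuous) viscosity solution of `G(D²u, Du, u, x) = 0` in `U`. -/
def ViscSol (n : ℕ) (G : Mat n → En n → ℝ → En n → ℝ) (U : Set (En n)) (u : En n → ℝ) :
    Prop :=
  ContinuousOn u U ∧ ViscSubsol n G U u ∧ ViscSupersol n G U u

/-- The set of symmetric matrices `A` with `λ I ≤ A ≤ Λ I` in the Loewner order. -/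
def PucciSet (n : ℕ) (lam Lam : ℝ) : Set (Mat n) :=
  {A | (A - lam • (1 : Mat n)).PosSemidef ∧ (Lam • (1 : Mat n) - A).PosSemidef}

/-- The Pucci maximal operator `P⁺`. -/
def PucciPlus (n : ℕ) (lam Lam : ℝ) (M : Mat n) : ℝ :=
  sSup ((fun A => -Matrix.trace (A * M)) '' PucciSet n lam Lam)

/-- The Pucci minimal operator `P⁻`. -/
def PucciMinus (n : ℕ) (lam Lam : ℝ) (M : Mat n) : ℝ :=
  sInf ((fun A => -Matrix.trace (A * M)) '' PucciSet n lam Lam)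

/-- A (Frobenius) norm on matrices. -/
def matNorm (n : ℕ) (M : Mat n) : ℝ := Real.sqrt (∑ i, ∑ j, (M i j) ^ 2)

/-- The open cone `C_ω` over a subset `ω` of the unit sphere. -/
def cone (n : ℕ) (ω : Set (En n)) : Set (En n) := {x | x ≠ 0 ∧ ‖x‖⁻¹ • x ∈ ω}

/-- The annular section `E(ω, r, R) = C_ω ∩ {r < |x| < R}`. -/
def Econe (n : ℕ) (ω : Set (En n)) (r R : ℝ) : Set (En n) :=
  cone n ω ∩ {x | r < ‖x‖ ∧ ‖x‖ < R}

/-- `H_α(ω)`: continuous functions on `C_ω` with `u(x) = t^α u(t x)` for all `t > 0`. -/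
def Hhom (n : ℕ) (ω : Set (En n)) (α : ℝ) (u : En n → ℝ) : Prop :=
  ContinuousOn u (cone n ω) ∧ ∀ x ∈ cone n ω, ∀ t : ℝ, 0 < t → u x = t ^ α * u (t • x)

/-- `S` is a `C²` hypersurface: locally a regular zero set of a `C²` function. -/
def IsC2Hypersurface (n : ℕ) (S : Set (En n)) : Prop :=
  ∀ x ∈ S, ∃ (V : Set (En n)) (f : En n → ℝ), IsOpen V ∧ x ∈ V ∧ ContDiffOn ℝ 2 f V ∧
    (∀ y ∈ V, fderiv ℝ f y ≠ 0) ∧ S ∩ V = {y ∈ V | f y = 0}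

/-- `ω` is a proper, `C²`-smooth, open connected subdomain of the unit sphere. -/
structure GoodCone (n : ℕ) (ω : Set (En n)) : Prop where
  subset_sphere : ω ⊆ sphere (0 : En n) 1
  nonempty : ω.Nonempty
  ne_sphere : ω ≠ sphere (0 : En n) 1
  rel_open : ∃ V : Set (En n), IsOpen V ∧ ω = V ∩ sphere (0 : En n) 1
  connected : IsConnected ω
  c2_boundary : IsC2Hypersurface n (frontier (cone n ω) \ {0})

/-- The structural conditions (ellipticity, homogeneity, Hölder regularity in `x`,
scaling invariance) on the operator `F`. -/
structure StructF (n : ℕ) (lam Lam mu K θ : ℝ) (F : OpType n) : Prop where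
  lam_pos : 0 < lam
  lam_le : lam ≤ Lam
  mu_nonneg : 0 ≤ mu
  K_pos : 0 < K
  theta_mem : θ ∈ Ioc (1 / 2 : ℝ) 1
  cont : ContinuousOn (fun q : Mat n × En n × En n => F q.1 q.2.1 q.2.2) {q | q.2.2 ≠ 0}
  ellip_lower : ∀ (M N : Mat n) (p q x : En n), x ≠ 0 →
    PucciMinus n lam Lam (M - N) - mu * ‖x‖⁻¹ * ‖p - q‖ ≤ F M p x - F N q x
  ellip_upper : ∀ (M N : Mat n) (p q x : En n), x ≠ 0 →
    F M p x - F N q x ≤ PucciPlus n lam Lam (M - N) + mu * ‖x‖⁻¹ * ‖p - q‖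
  homog : ∀ t : ℝ, 0 ≤ t → ∀ (M : Mat n) (p x : En n), x ≠ 0 → F (t • M) (t • p) x = t * F M p x
  holder : ∀ (M : Mat n) (x y : En n), ‖x‖ = 1 → ‖y‖ = 1 →
    |F M 0 x - F M 0 y| ≤ K * (1 + matNorm n M) * ‖x - y‖ ^ θ
  scaling : ∀ r : ℝ, 0 < r → ∀ (M : Mat n) (p x : En n), x ≠ 0 →
    F ((r ^ 2) • M) (r • p) x = r ^ 2 * F M p (r • x)

/-- The admissible set defining `α⁺(F, ω)`. -/
def alphaPlusSet (n : ℕ) (F : OpType n) (ω : Set (En n)) : Set ℝ :=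
  {α | 0 < α ∧ ∃ u : En n → ℝ, Hhom n ω α u ∧ (∀ x ∈ cone n ω, 0 < u x) ∧
    ViscSupersol n (fun M p _ x => F M p x) (cone n ω) u}

/-- The admissible set defining `α⁻(F, ω)`. -/
def alphaMinusSet (n : ℕ) (F : OpType n) (ω : Set (En n)) : Set ℝ :=
  {α | α < 0 ∧ ∃ u : En n → ℝ, Hhom n ω α u ∧ (∀ x ∈ cone n ω, 0 < u x) ∧
    ViscSupersol n (fun M p _ x => F M p x) (cone n ω) u}

/-- The scaling exponent `α⁺(F, ω)`. -/
def alphaPlus (n : ℕ) (F : OpType n) (ω : Set (En n)) : ℝ := sSup (alphaPlusSet n F ω)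

/-- The scaling exponent `α⁻(F, ω)`. -/
def alphaMinus (n : ℕ) (F : OpType n) (ω : Set (En n)) : ℝ := sInf (alphaMinusSet n F ω)

/-- `Ψ` is the (α⁺)-homogeneous positive singular solution `Ψ⁺` in the cone `C_ω`. -/
def IsPsiPlus (n : ℕ) (F : OpType n) (ω : Set (En n)) (Ψ : En n → ℝ) : Prop :=
  Hhom n ω (alphaPlus n F ω) Ψ ∧
  ContinuousOn Ψ (closure (cone n ω) \ {0}) ∧
  (∀ x ∈ cone n ω, 0 < Ψ x) ∧
  (∀ x ∈ frontier (cone n ω) \ {0}, Ψ x = 0) ∧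
  ViscSol n (fun M p _ x => F M p x) (cone n ω) Ψ

/-- `Ψ` is the (α⁻)-homogeneous positive singular solution `Ψ⁻` in the cone `C_ω`. -/
def IsPsiMinus (n : ℕ) (F : OpType n) (ω : Set (En n)) (Ψ : En n → ℝ) : Prop :=
  Hhom n ω (alphaMinus n F ω) Ψ ∧
  ContinuousOn Ψ (closure (cone n ω)) ∧
  (∀ x ∈ cone n ω, 0 < Ψ x) ∧
  (∀ x ∈ frontier (cone n ω) \ {0}, Ψ x = 0) ∧
  ViscSol n (fun M p _ x => F M p x) (cone n ω) Ψ

/-- `Ω` has a conical corner at `0 ∈ ∂Ω`, straightened by the `C²` diffeomorphism `ζ` of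
the unit ball, with `ζ(Ω ∩ B₁) = C_ω ∩ B₁`, `ζ(0) = 0` and `Dζ(0) = I`. -/
structure ConicalCorner (n : ℕ) (ω Ω : Set (En n)) (ζ : En n → En n) : Prop where
  zero_bdry : (0 : En n) ∈ frontier Ω
  contDiff : ContDiffOn ℝ 2 ζ (ball (0 : En n) 1)
  mapsTo : MapsTo ζ (ball (0 : En n) 1) (ball (0 : En n) 1)
  exists_inv : ∃ ξ : En n → En n, ContDiffOn ℝ 2 ξ (ball (0 : En n) 1) ∧
    MapsTo ξ (ball (0 : En n) 1) (ball (0 : En n) 1) ∧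
    (∀ x ∈ ball (0 : En n) 1, ξ (ζ x) = x) ∧ ∀ y ∈ ball (0 : En n) 1, ζ (ξ y) = y
  image_eq : ζ '' (Ω ∩ ball (0 : En n) 1) = cone n ω ∩ ball (0 : En n) 1
  map_zero : ζ 0 = 0
  deriv_zero : fderiv ℝ ζ 0 = ContinuousLinearMap.id ℝ (En n)

/-- The inversion `x ↦ x / |x|²`. -/
def sInv (n : ℕ) (x : En n) : En n := (‖x‖ ^ 2)⁻¹ • x

/-!
Choose `β ∈ (α, α⁺)` with `2β ≥ α + α⁺` carrying a positive `β`-homogeneous supersolution `v`,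
and take `u = v ^ (α / β) ∈ H_α`. If `φ` touches `u` from below at `x₀`, then `g ∘ φ`, with `g`
a smooth version of `s ↦ s ^ (β / α)` near `u(x₀)`, touches `v` from below; the chain rule and
`P⁺(c p ⊗ p) ≤ -λ c |p|²` turn `F(D²(g ∘ φ), D(g ∘ φ)) ≥ 0` into
`λ (β / α - 1) |Dφ|² ≤ u F(D²φ, Dφ)`. Since `u` is `-α`-homogeneous, Euler's identity
`x₀ · Dφ(x₀) = -α u(x₀)` holds at the touching point, so `|Dφ| ≥ α u / |x₀|` and
`F(D²φ, Dφ) ≥ λ α (β - α) |x₀|⁻² u ≥ c |x₀|⁻² u`.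
-/

open Matrix

lemma smul_mem_cone {n : ℕ} {ω : Set (En n)} {x : En n} (hx : x ∈ cone n ω) {t : ℝ}
    (ht : 0 < t) : t • x ∈ cone n ω := by
  refine ⟨smul_ne_zero ht.ne' hx.1, ?_⟩
  rw [norm_smul, Real.norm_eq_abs, abs_of_pos ht, smul_smul, mul_inv, mul_comm t⁻¹,
    inv_mul_cancel_right₀ ht.ne']
  exact hx.2

namespace Hhom

variable {n : ℕ} {ω : Set (En n)} {α : ℝ} {u : En n → ℝ}

lemma apply_smul (hu : Hhom n ω α u) {x : En n} (hx : x ∈ cone n ω) {t : ℝ} (ht : 0 < t) :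
    u (t • x) = t ^ (-α) * u x := by
  rw [hu.2 x hx t ht, Real.rpow_neg ht.le, inv_mul_cancel_left₀ (Real.rpow_pos_of_pos ht α).ne']

lemma rpow (hu : Hhom n ω α u) (hpos : ∀ x ∈ cone n ω, 0 < u x) {γ : ℝ} (hγ : 0 ≤ γ) :
    Hhom n ω (α * γ) fun x => u x ^ γ := by
  refine ⟨hu.1.rpow_const fun _ _ => Or.inr hγ, fun x hx t ht => ?_⟩
  dsimp only
  rw [hu.2 x hx t ht, Real.mul_rpow (Real.rpow_nonneg ht.le α) (hpos _ (smul_mem_cone hx ht)).le,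
    ← Real.rpow_mul ht.le]

lemma fderiv_apply_self_of_isLocalMinOn {φ : En n → ℝ} {x₀ : En n} (hu : Hhom n ω α u)
    (hx₀ : x₀ ∈ cone n ω) (hφ : DifferentiableAt ℝ φ x₀)
    (hmin : IsLocalMinOn (fun x => u x - φ x) (cone n ω) x₀) :
    fderiv ℝ φ x₀ x₀ = -α * u x₀ := by
  have hray : Tendsto (fun t : ℝ => t • x₀) (𝓝 1) (𝓝[cone n ω] x₀) := by
    refine tendsto_nhdsWithin_iff.2 ⟨?_, ?_⟩
    · simpa using (continuous_id.smul continuous_const).tendsto (1 : ℝ) (f := fun t : ℝ => t • x₀)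
    · filter_upwards [lt_mem_nhds one_pos] with t ht using smul_mem_cone hx₀ ht
  have hloc : IsLocalMin (fun t : ℝ => t ^ (-α) * u x₀ - φ (t • x₀)) 1 := by
    filter_upwards [hray.eventually hmin, lt_mem_nhds one_pos] with t ht ht₀
    simpa [hu.apply_smul hx₀ ht₀] using ht
  have hderiv : HasDerivAt (fun t : ℝ => t ^ (-α) * u x₀ - φ (t • x₀))
      (-α * u x₀ - fderiv ℝ φ x₀ x₀) 1 := by
    have hpow := (Real.hasDerivAt_rpow_const (p := -α) (Or.inl one_ne_zero)).mul_const (u x₀)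
    have hφ' : HasFDerivAt φ (fderiv ℝ φ x₀) ((1 : ℝ) • x₀) := by
      rw [one_smul]; exact hφ.hasFDerivAt
    have hlin := hφ'.comp_hasDerivAt (1 : ℝ) ((hasDerivAt_id (1 : ℝ)).smul_const x₀)
    exact (hpow.sub hlin).congr_deriv (by simp)
  linarith [hloc.hasDerivAt_eq_zero hderiv]

end Hhom

lemma smul_one_mem_pucciSet {n : ℕ} {lam Lam : ℝ} (h : lam ≤ Lam) :
    lam • (1 : Mat n) ∈ PucciSet n lam Lam := by
  refine ⟨by simpa using PosSemidef.zero, ?_⟩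
  rw [← sub_smul, smul_one_eq_diagonal]
  exact PosSemidef.diagonal fun _ => sub_nonneg.2 h

lemma lam_mul_dotProduct_le_of_mem_pucciSet {n : ℕ} {lam Lam : ℝ} {A : Mat n}
    (hA : A ∈ PucciSet n lam Lam) (P : Fin n → ℝ) : lam * (P ⬝ᵥ P) ≤ P ⬝ᵥ A *ᵥ P := by
  have h := hA.1.dotProduct_mulVec_nonneg P
  rwa [star_trivial, sub_mulVec, dotProduct_sub, smul_mulVec, one_mulVec,
    dotProduct_smul, smul_eq_mul, sub_nonneg] at h

lemma pucciPlus_smul_vecMulVec_le {n : ℕ} {lam Lam c : ℝ} (h : lam ≤ Lam) (hc : 0 ≤ c)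
    (P : Fin n → ℝ) :
    PucciPlus n lam Lam (c • vecMulVec P P) ≤ -(lam * c * (P ⬝ᵥ P)) := by
  refine csSup_le ((Set.nonempty_of_mem (smul_one_mem_pucciSet h)).image _) ?_
  rintro _ ⟨A, hA, rfl⟩
  have htr : (A * (c • vecMulVec P P)).trace = c * (P ⬝ᵥ A *ᵥ P) := by
    rw [Matrix.mul_smul, Matrix.trace_smul, mul_vecMulVec, trace_vecMulVec, dotProduct_comm,
      smul_eq_mul]
  change -_ ≤ _
  rw [htr, neg_le_neg_iff, mul_comm lam, mul_assoc]
  exact mul_le_mul_of_nonneg_left (lam_mul_dotProduct_le_of_mem_pucciSet hA P) hc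

lemma exists_contDiff_eventuallyEq_rpow {s₀ : ℝ} (hs₀ : 0 < s₀) (p : ℝ) :
    ∃ g : ℝ → ℝ, ContDiff ℝ 2 g ∧ g =ᶠ[𝓝 s₀] fun s => s ^ p := by
  let ρ : ContDiffBump s₀ := ⟨s₀ / 4, s₀ / 2, by positivity, by linarith⟩
  refine ⟨fun s => ρ s * s ^ p, ?_, ?_⟩
  · refine contDiff_of_contDiffOn_union_of_isOpen (s := Ioi 0) (t := (closedBall s₀ (s₀ / 2))ᶜ)
      ?_ ?_ ?_ isOpen_Ioi isClosed_closedBall.isOpen_compl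
    · exact ρ.contDiff.contDiffOn.mul fun s hs =>
        (Real.contDiffAt_rpow_const_of_ne (ne_of_gt hs)).contDiffWithinAt
    · refine contDiffOn_const (c := 0).congr fun s hs => ?_
      rw [ρ.zero_of_le_dist (le_of_lt (not_le.1 hs)), zero_mul]
    · refine eq_univ_of_forall fun s => (lt_or_ge 0 s).imp id fun hs => ?_
      rw [mem_compl_iff, mem_closedBall, Real.dist_eq, abs_of_nonpos (by linarith)]
      linarith
  · filter_upwards [closedBall_mem_nhds s₀ (show 0 < s₀ / 4 by positivity)] with s hs
    rw [ρ.one_of_mem_closedBall hs, one_mul]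

lemma deriv_eq_of_eventuallyEq_rpow {g : ℝ → ℝ} {s₀ p : ℝ} (hg : g =ᶠ[𝓝 s₀] fun s => s ^ p) :
    deriv g s₀ = p * s₀ ^ (p - 1) ∧ deriv (deriv g) s₀ = p * (p - 1) * s₀ ^ (p - 2) := by
  refine ⟨by rw [hg.deriv_eq, Real.deriv_rpow_const], ?_⟩
  rw [hg.deriv.deriv_eq, Real.deriv_rpow_const', deriv_const_mul_field,
    Real.deriv_rpow_const]
  ring_nf

section Calculus

variable {n : ℕ}

lemma inner_grad (φ : En n → ℝ) (x v : En n) : inner ℝ v (grad n φ x) = fderiv ℝ φ x v := by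
  conv_rhs => rw [← (EuclideanSpace.basisFun (Fin n) ℝ).sum_repr v]
  simp [grad, PiLp.inner_apply, mul_comm]

lemma grad_add_const (φ : En n → ℝ) (c : ℝ) : grad n (fun y => φ y + c) = grad n φ := by
  ext x : 1
  simp only [grad, fderiv_add_const]

lemma hess_add_const (φ : En n → ℝ) (c : ℝ) : hess n (fun y => φ y + c) = hess n φ := by
  ext x : 1
  simp only [hess, fderiv_add_const]

lemma grad_comp {φ : En n → ℝ} {g : ℝ → ℝ} {x : En n} (hφ : DifferentiableAt ℝ φ x)
    (hg : DifferentiableAt ℝ g (φ x)) :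
    grad n (fun y => g (φ y)) x = deriv g (φ x) • grad n φ x := by
  have h : HasFDerivAt (fun y => g (φ y)) (deriv g (φ x) • fderiv ℝ φ x) x :=
    hg.hasDerivAt.comp_hasFDerivAt x hφ.hasFDerivAt
  ext i
  simp [grad, h.fderiv]

lemma hess_comp {φ : En n → ℝ} {g : ℝ → ℝ} (hφ : ContDiff ℝ 2 φ) (hg : ContDiff ℝ 2 g)
    (x : En n) :
    hess n (fun y => g (φ y)) x = deriv g (φ x) • hess n φ x +
      deriv (deriv g) (φ x) • vecMulVec (grad n φ x) (grad n φ x) := by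
  have hφ' : Differentiable ℝ φ := hφ.differentiable (by norm_num)
  have hg' : Differentiable ℝ (deriv g) :=
    (hg.iterate_deriv' 1 1).differentiable (by norm_num)
  have hpartial : ∀ j, (fun y => fderiv ℝ (fun y => g (φ y)) y (EuclideanSpace.single j 1)) =
      fun y => deriv g (φ y) * fderiv ℝ φ y (EuclideanSpace.single j 1) := fun j => by
    funext y
    have h : HasFDerivAt (fun y => g (φ y)) (deriv g (φ y) • fderiv ℝ φ y) y :=
      (hg.differentiable (by norm_num) _).hasDerivAt.comp_hasFDerivAt y (hφ' y).hasFDerivAt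
    simp [h.fderiv]
  ext i j
  have hd : HasFDerivAt (fun y => deriv g (φ y)) (deriv (deriv g) (φ x) • fderiv ℝ φ x) x :=
    (hg' _).hasDerivAt.comp_hasFDerivAt x (hφ' x).hasFDerivAt
  have he : DifferentiableAt ℝ (fun y => fderiv ℝ φ y (EuclideanSpace.single j 1)) x :=
    ((hφ.fderiv_right (m := 1) (by norm_num)).differentiable (by norm_num) x).clm_apply
      (differentiableAt_const _)
  have hprod : HasFDerivAt
      (fun y => deriv g (φ y) * fderiv ℝ φ y (EuclideanSpace.single j 1)) _ x :=
    hd.mul he.hasFDerivAt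
  simp only [hess, of_apply, hpartial j, hprod.fderiv]
  simp only [_root_.add_apply, _root_.smul_apply, smul_eq_mul, grad,
    Matrix.add_apply, of_apply, Matrix.smul_apply, vecMulVec_apply]
  ring

end Calculus

lemma IsLocalMinOn.rpow_sub_comp_add_const {E : Type*} [TopologicalSpace E] {s : Set E}
    {u φ : E → ℝ} {g : ℝ → ℝ} {x₀ : E} {p : ℝ}
    (hmin : IsLocalMinOn (fun x => u x - φ x) s x₀) (hφ : ContinuousAt φ x₀) (hu₀ : 0 < u x₀)
    (hp : 0 ≤ p) (hg : g =ᶠ[𝓝 (u x₀)] fun s => s ^ p) :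
    IsLocalMinOn (fun x => u x ^ p - g (φ x + (u x₀ - φ x₀))) s x₀ := by
  have hw : Tendsto (fun x => φ x + (u x₀ - φ x₀)) (𝓝[s] x₀) (𝓝 (u x₀)) := by
    have hc : ContinuousAt (fun x => φ x + (u x₀ - φ x₀)) x₀ := hφ.add continuousAt_const
    simpa using hc.tendsto.mono_left nhdsWithin_le_nhds
  filter_upwards [hmin, hw.eventually hg, hw.eventually (lt_mem_nhds hu₀)] with x hx hgx hpos
  rw [hgx, show φ x₀ + (u x₀ - φ x₀) = u x₀ by ring, hg.eq_of_nhds, sub_self, sub_nonneg]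
  exact Real.rpow_le_rpow hpos.le (by linarith) hp

lemma StructF.lam_mul_norm_sq_le {n : ℕ} {lam Lam mu K θ : ℝ} {F : OpType n}
    (hF : StructF n lam Lam mu K θ F) {c₁ c₂ : ℝ} (hc₁ : 0 ≤ c₁) (hc₂ : 0 ≤ c₂) {A : Mat n}
    {P x : En n} (hx : x ≠ 0) (h : 0 ≤ F (c₁ • A + c₂ • vecMulVec P P) (c₁ • P) x) :
    lam * c₂ * ‖P‖ ^ 2 ≤ c₁ * F A P x := by
  have hup := hF.ellip_upper (c₁ • A + c₂ • vecMulVec P P) (c₁ • A) (c₁ • P) (c₁ • P) x hx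
  rw [add_sub_cancel_left, sub_self, norm_zero, mul_zero, add_zero, hF.homog c₁ hc₁ A P x hx]
    at hup
  have hnorm : ‖P‖ ^ 2 = P.ofLp ⬝ᵥ P.ofLp := by
    rw [← real_inner_self_eq_norm_sq, EuclideanSpace.inner_eq_star_dotProduct, star_trivial]
  rw [hnorm]
  linarith [pucciPlus_smul_vecMulVec_le (n := n) hF.lam_le hc₂ P.ofLp]

lemma ViscSupersol.mono {n : ℕ} {G₁ G₂ : Mat n → En n → ℝ → En n → ℝ} {U : Set (En n)}
    {u : En n → ℝ} (hu : ViscSupersol n G₁ U u)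
    (h : ∀ M p, ∀ x ∈ U, G₁ M p (u x) x ≤ G₂ M p (u x) x) : ViscSupersol n G₂ U u :=
  fun φ hφ x₀ hx₀ hmin => (hu φ hφ x₀ hx₀ hmin).trans (h _ _ x₀ hx₀)

lemma ViscSupersol.congr {n : ℕ} {G : Mat n → En n → ℝ → En n → ℝ} {U : Set (En n)}
    {u v : En n → ℝ} (hu : ViscSupersol n G U u) (h : EqOn u v U) : ViscSupersol n G U v :=
  fun φ hφ x₀ hx₀ hmin => h hx₀ ▸ hu φ hφ x₀ hx₀ (hmin.congr
    (eventually_nhdsWithin_of_forall fun x hx => by simp only [h hx]) hx₀)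

/-- Composing `φ` with a smooth version of `s ↦ s ^ p` gives a test function for `u ^ p`. -/
lemma StructF.lam_mul_norm_grad_sq_le {n : ℕ} {lam Lam mu K θ : ℝ} {F : OpType n}
    (hF : StructF n lam Lam mu K θ F) {U : Set (En n)} {u φ : En n → ℝ} {p : ℝ} {x₀ : En n}
    (hp : 1 < p) (hsup : ViscSupersol n (fun M q _ x => F M q x) U fun x => u x ^ p)
    (hφ : ContDiff ℝ 2 φ) (hx₀ : x₀ ∈ U) (hx₀0 : x₀ ≠ 0) (hu₀ : 0 < u x₀)
    (hmin : IsLocalMinOn (fun x => u x - φ x) U x₀) :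
    lam * (p - 1) * ‖grad n φ x₀‖ ^ 2 ≤ u x₀ * F (hess n φ x₀) (grad n φ x₀) x₀ := by
  set s₀ := u x₀
  obtain ⟨g, hg, hgs₀⟩ := exists_contDiff_eventuallyEq_rpow hu₀ p
  obtain ⟨hg₁, hg₂⟩ := deriv_eq_of_eventuallyEq_rpow hgs₀
  have hsuper := hsup (fun x => g (φ x + (s₀ - φ x₀))) (hg.comp (hφ.add contDiff_const)) x₀ hx₀
    (hmin.rpow_sub_comp_add_const hφ.continuous.continuousAt hu₀ (by linarith) hgs₀)
  dsimp only at hsuper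
  rw [hess_comp (hφ.add contDiff_const) hg,
    grad_comp ((hφ.differentiable (by norm_num) x₀).add_const _)
    (hg.differentiable (by norm_num) _), hess_add_const, grad_add_const, add_sub_cancel, hg₁,
    hg₂] at hsuper
  have hc₁ : 0 < p * s₀ ^ (p - 1) := by
    have : 0 < p := by linarith
    positivity
  have hc₂ : 0 ≤ p * (p - 1) * s₀ ^ (p - 2) := by
    have : 0 < p - 1 := by linarith
    positivity
  have hell := hF.lam_mul_norm_sq_le hc₁.le hc₂ hx₀0 hsuper
  have hc : p * (p - 1) * s₀ ^ (p - 2) * s₀ = (p - 1) * (p * s₀ ^ (p - 1)) := by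
    rw [mul_assoc _ (s₀ ^ (p - 2)), ← Real.rpow_add_one hu₀.ne']
    ring_nf
  refine le_of_mul_le_mul_left ?_ hc₁
  linear_combination s₀ * hell - lam * ‖grad n φ x₀‖ ^ 2 * hc

theorem StructF.viscSupersol_rpow {n : ℕ} {lam Lam mu K θ : ℝ} {F : OpType n}
    {ω : Set (En n)} (hF : StructF n lam Lam mu K θ F) {α β : ℝ} (hα : 0 < α) (hαβ : α < β)
    {v : En n → ℝ} (hv : Hhom n ω β v) (hv_pos : ∀ x ∈ cone n ω, 0 < v x)
    (hv_sup : ViscSupersol n (fun M p _ x => F M p x) (cone n ω) v) :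
    ViscSupersol n (fun M p z x => F M p x - lam * α * (β - α) * (‖x‖ ^ 2)⁻¹ * z) (cone n ω)
      (fun x => v x ^ (α / β)) := by
  intro φ hφ x₀ hx₀ hmin
  have hβ : 0 < β := hα.trans hαβ
  have hu : Hhom n ω α fun x => v x ^ (α / β) := by
    simpa only [mul_div_cancel₀ _ hβ.ne'] using hv.rpow hv_pos (div_pos hα hβ).le
  set s₀ := v x₀ ^ (α / β)
  have hs₀ : 0 < s₀ := Real.rpow_pos_of_pos (hv_pos x₀ hx₀) _
  have hpow : ViscSupersol n (fun M p _ x => F M p x) (cone n ω)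
      fun x => (v x ^ (α / β)) ^ (β / α) := hv_sup.congr fun x hx => by
    rw [← Real.rpow_mul (hv_pos x hx).le, show α / β * (β / α) = 1 by field_simp,
      Real.rpow_one]
  have h1 := hF.lam_mul_norm_grad_sq_le ((one_lt_div hα).2 hαβ) hpow hφ hx₀ hx₀.1 hs₀ hmin
  set P := grad n φ x₀
  have hgrad : α * s₀ ≤ ‖x₀‖ * ‖P‖ := by
    calc α * s₀ = |inner ℝ x₀ P| := by
          rw [inner_grad, hu.fderiv_apply_self_of_isLocalMinOn hx₀ (hφ.differentiable
            (by norm_num) x₀) hmin, neg_mul, abs_neg, abs_of_pos (mul_pos hα hs₀)]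
      _ ≤ ‖x₀‖ * ‖P‖ := abs_real_inner_le_norm x₀ P
  have h2 : lam * α * (β - α) * s₀ ^ 2 ≤ ‖x₀‖ ^ 2 * (s₀ * F (hess n φ x₀) P x₀) := by
    have hpα : (β / α - 1) * α ^ 2 = α * (β - α) := by field_simp
    have hlam : 0 ≤ lam * (β / α - 1) :=
      mul_nonneg hF.lam_pos.le (by rw [sub_nonneg, one_le_div hα]; exact hαβ.le)
    calc lam * α * (β - α) * s₀ ^ 2 = lam * (β / α - 1) * (α * s₀) ^ 2 := by
          linear_combination (-lam * s₀ ^ 2) * hpα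
      _ ≤ lam * (β / α - 1) * (‖x₀‖ * ‖P‖) ^ 2 :=
          mul_le_mul_of_nonneg_left (pow_le_pow_left₀ (by positivity) hgrad 2) hlam
      _ = ‖x₀‖ ^ 2 * (lam * (β / α - 1) * ‖P‖ ^ 2) := by ring
      _ ≤ ‖x₀‖ ^ 2 * (s₀ * F (hess n φ x₀) P x₀) := by gcongr
  have hx₀n : 0 < ‖x₀‖ := norm_pos_iff.2 hx₀.1
  show 0 ≤ F (hess n φ x₀) P x₀ - lam * α * (β - α) * (‖x₀‖ ^ 2)⁻¹ * s₀
  rw [sub_nonneg, show lam * α * (β - α) * (‖x₀‖ ^ 2)⁻¹ * s₀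
    = lam * α * (β - α) * s₀ ^ 2 / (‖x₀‖ ^ 2 * s₀) by field_simp, div_le_iff₀ (by positivity)]
  linarith

lemma exists_mem_alphaPlusSet_gt {n : ℕ} {F : OpType n} {ω : Set (En n)} {b : ℝ}
    (h₀ : 0 < alphaPlus n F ω) (hb : b < alphaPlus n F ω) : ∃ β ∈ alphaPlusSet n F ω, b < β := by
  refine exists_lt_of_lt_csSup ?_ hb
  by_contra hempty
  rw [not_nonempty_iff_eq_empty] at hempty
  rw [alphaPlus, hempty, Real.sSup_empty] at h₀
  exact lt_irrefl 0 h₀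

theorem stmt_14_general (n : ℕ) (lam Lam mu K θ : ℝ) (ω : Set (En n)) (F : OpType n)
    (hF : StructF n lam Lam mu K θ F)
    (α : ℝ) (hα : 0 < α) (hα' : α < alphaPlus n F ω) :
    ∃ u : En n → ℝ, Hhom n ω α u ∧ (∀ x ∈ cone n ω, 0 < u x) ∧
      ViscSupersol n
        (fun M p z x =>
          F M p x - (1 / 2 * lam * α * (alphaPlus n F ω - α)) * (‖x‖ ^ 2)⁻¹ * z)
        (cone n ω) u := by
  obtain ⟨β, ⟨hβ, v, hv, hv_pos, hv_sup⟩, hβ_gt⟩ := exists_mem_alphaPlusSet_gt (hα.trans hα')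
    (max_lt hα' (by linarith : (α + alphaPlus n F ω) / 2 < alphaPlus n F ω))
  have hαβ : α < β := (le_max_left _ _).trans_lt hβ_gt
  have hβ_half : (α + alphaPlus n F ω) / 2 < β := (le_max_right _ _).trans_lt hβ_gt
  refine ⟨fun x => v x ^ (α / β), ?_, fun x hx => Real.rpow_pos_of_pos (hv_pos x hx) _, ?_⟩
  · simpa only [mul_div_cancel₀ _ hβ.ne'] using hv.rpow hv_pos (div_pos hα hβ).le
  refine (hF.viscSupersol_rpow hα hαβ hv hv_pos hv_sup).mono fun M p x hx => ?_
  have hc : 1 / 2 * lam * α * (alphaPlus n F ω - α) ≤ lam * α * (β - α) := by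
    have := mul_le_mul_of_nonneg_left (show (alphaPlus n F ω - α) / 2 ≤ β - α by linarith)
      (mul_pos hF.lam_pos hα).le
    linarith
  have hu : 0 ≤ v x ^ (α / β) := (Real.rpow_pos_of_pos (hv_pos x hx) _).le
  gcongr

/-- **Lemma 4.1 (strict supersolutions below `α⁺`).**
For `0 < α < α⁺(F, ω)` there is a positive `u ∈ H_α(ω)` with
`F(D²u, Du, x) ≥ c |x|⁻² u` in `C_ω`, where `c = λ α (α⁺ - α) / 2`. -/
theorem stmt_14 (n : ℕ) (hn : 2 ≤ n) (lam Lam mu K θ : ℝ) (ω : Set (En n)) (F : OpType n)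
    (hω : GoodCone n ω) (hF : StructF n lam Lam mu K θ F)
    (α : ℝ) (hα : 0 < α) (hα' : α < alphaPlus n F ω) :
    ∃ u : En n → ℝ, Hhom n ω α u ∧ (∀ x ∈ cone n ω, 0 < u x) ∧
      ViscSupersol n
        (fun M p z x =>
          F M p x - (1 / 2 * lam * α * (alphaPlus n F ω - α)) * (‖x‖ ^ 2)⁻¹ * z)
        (cone n ω) u :=
  stmt_14_general n lam Lam mu K θ ω F hF α hα hα'
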